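/- arXiv:1809.10585 — 7 statements merged into one kernel-verified Lean document; each statement's English description precedes it below -/
import Mathlib

section
/- Let X be a real m₂×m₁ matrix, and let R₁ (m₁×m₁) and R₂ (m₂×m₂) be invertible matrices satisfying R₁ᵀR₁ = I + XᵀX and R₂ᵀR₂ = I + XXᵀ. Then the matrix Q̃ := [[I, −Xᵀ],[X, I]] · [[R₁⁻¹, 0],[0, R₂⁻¹]] is orthogonal, i.e., Q̃ᵀQ̃ = I. -/
open Matrix

/-- If `R₁ᵀR₁ = I + XᵀX` and `R₂ᵀR₂ = I + XXᵀ` with `R₁, R₂` invertible, then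
`Q̃ := [[I, -Xᵀ],[X, I]] * [[R₁⁻¹, 0],[0, R₂⁻¹]]` is orthogonal. -/
theorem orthogonalized_block_factor_orthogonal {m₁ m₂ : ℕ}
    (X : Matrix (Fin m₂) (Fin m₁) ℝ)
    (R₁ : Matrix (Fin m₁) (Fin m₁) ℝ) (R₂ : Matrix (Fin m₂) (Fin m₂) ℝ)
    (hR₁ : IsUnit R₁) (hR₂ : IsUnit R₂)
    (h₁ : R₁ᵀ * R₁ = 1 + Xᵀ * X) (h₂ : R₂ᵀ * R₂ = 1 + X * Xᵀ) :
    (fromBlocks 1 (-Xᵀ) X 1 * fromBlocks R₁⁻¹ 0 0 R₂⁻¹)ᵀ *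
      (fromBlocks 1 (-Xᵀ) X 1 * fromBlocks R₁⁻¹ 0 0 R₂⁻¹) = 1 := by
  have hd1 : IsUnit R₁.det := (isUnit_iff_isUnit_det R₁).mp hR₁
  have hd2 : IsUnit R₂.det := (isUnit_iff_isUnit_det R₂).mp hR₂
  have hi1 : IsUnit R₁ᵀ.det := by rwa [Matrix.det_transpose]
  have hi2 : IsUnit R₂ᵀ.det := by rwa [Matrix.det_transpose]
  have key1 : R₁⁻¹ᵀ * ((1 + Xᵀ * X) * R₁⁻¹) = 1 := by
    rw [← h₁, Matrix.mul_assoc, Matrix.mul_nonsing_inv _ hd1,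
      Matrix.mul_one, Matrix.transpose_nonsing_inv,
      Matrix.nonsing_inv_mul _ hi1]
  have key2 : R₂⁻¹ᵀ * ((1 + X * Xᵀ) * R₂⁻¹) = 1 := by
    rw [← h₂, Matrix.mul_assoc, Matrix.mul_nonsing_inv _ hd2,
      Matrix.mul_one, Matrix.transpose_nonsing_inv,
      Matrix.nonsing_inv_mul _ hi2]
  rw [Matrix.transpose_mul, Matrix.fromBlocks_transpose, Matrix.fromBlocks_transpose]
  simp only [Matrix.transpose_one, Matrix.transpose_zero, Matrix.transpose_neg,
    Matrix.transpose_transpose]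
  rw [Matrix.mul_assoc, ← Matrix.mul_assoc (fromBlocks 1 Xᵀ (-X) 1)]
  simp only [Matrix.fromBlocks_multiply]
  simp only [Matrix.one_mul, Matrix.mul_one, Matrix.mul_zero, Matrix.zero_mul,
    add_zero, zero_add, neg_add_cancel, add_neg_cancel, Matrix.zero_mul]
  rw [show -X * -Xᵀ + 1 = 1 + X * Xᵀ by rw [Matrix.neg_mul, Matrix.mul_neg, neg_neg, add_comm]]
  simp [key1, key2, ← Matrix.fromBlocks_one]
end

section
/- Let A = [[A₁₁, A₁₂],[A₂₁, A₂₂]] be a square real matrix in 2×2 block form with A₁₁ square and invertible, set X = A₂₁·A₁₁⁻¹, and let R₁, R₂ be invertible matrices with R₁ᵀR₁ = I + XᵀX and R₂ᵀR₂ = I + XXᵀ. Define Q̃ := [[I, −Xᵀ],[X, I]] · [[R₁⁻¹, 0],[0, R₂⁻¹]] and R̃ := [[R₁·A₁₁, R₁⁻ᵀ·(A₁₂ + Xᵀ·A₂₂)],[0, R₂⁻ᵀ·(A₂₂ − X·A₁₂)]], where R⁻ᵀ denotes the inverse of the transpose. Then A = Q̃·R̃. (Orthogonalized block LU factorization.)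 -/
open Matrix

/-- Orthogonalized block LU factorization: with `X = A₂₁ * A₁₁⁻¹`,
`R₁ᵀR₁ = I + XᵀX`, `R₂ᵀR₂ = I + XXᵀ`, one has `A = Q̃ * R̃` with
`Q̃ = [[I, -Xᵀ],[X, I]] * [[R₁⁻¹, 0],[0, R₂⁻¹]]` and
`R̃ = [[R₁A₁₁, R₁⁻ᵀ(A₁₂ + XᵀA₂₂)],[0, R₂⁻ᵀ(A₂₂ - XA₁₂)]]`. -/
theorem orthogonalized_block_lu {m₁ m₂ : ℕ}
    (A₁₁ : Matrix (Fin m₁) (Fin m₁) ℝ) (A₁₂ : Matrix (Fin m₁) (Fin m₂) ℝ)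
    (A₂₁ : Matrix (Fin m₂) (Fin m₁) ℝ) (A₂₂ : Matrix (Fin m₂) (Fin m₂) ℝ)
    (hA₁₁ : IsUnit A₁₁)
    (X : Matrix (Fin m₂) (Fin m₁) ℝ) (hX : X = A₂₁ * A₁₁⁻¹)
    (R₁ : Matrix (Fin m₁) (Fin m₁) ℝ) (R₂ : Matrix (Fin m₂) (Fin m₂) ℝ)
    (hR₁ : IsUnit R₁) (hR₂ : IsUnit R₂)
    (h₁ : R₁ᵀ * R₁ = 1 + Xᵀ * X) (h₂ : R₂ᵀ * R₂ = 1 + X * Xᵀ) :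
    fromBlocks A₁₁ A₁₂ A₂₁ A₂₂ =
      (fromBlocks 1 (-Xᵀ) X 1 * fromBlocks R₁⁻¹ 0 0 R₂⁻¹) *
        fromBlocks (R₁ * A₁₁) ((R₁ᵀ)⁻¹ * (A₁₂ + Xᵀ * A₂₂))
          0 ((R₂ᵀ)⁻¹ * (A₂₂ - X * A₁₂)) := by
  have hdR₁ : IsUnit R₁.det := (Matrix.isUnit_iff_isUnit_det _).mp hR₁
  have hdA : IsUnit A₁₁.det := (Matrix.isUnit_iff_isUnit_det _).mp hA₁₁
  have hS₁ : IsUnit (1 + Xᵀ * X) := h₁ ▸ ((Matrix.isUnit_iff_isUnit_det _).mpr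
    (by rw [Matrix.det_transpose]; exact hdR₁)).mul hR₁
  have hS₂ : IsUnit (1 + X * Xᵀ) := h₂ ▸ ((Matrix.isUnit_iff_isUnit_det _).mpr
    (by rw [Matrix.det_transpose]; exact (Matrix.isUnit_iff_isUnit_det _).mp hR₂)).mul hR₂
  have hdS₁ : IsUnit (1 + Xᵀ * X).det := (Matrix.isUnit_iff_isUnit_det _).mp hS₁
  have hdS₂ : IsUnit (1 + X * Xᵀ).det := (Matrix.isUnit_iff_isUnit_det _).mp hS₂
  have e₁ : R₁⁻¹ * (R₁ᵀ)⁻¹ = (1 + Xᵀ * X)⁻¹ := by rw [← Matrix.mul_inv_rev, h₁]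
  have e₂ : R₂⁻¹ * (R₂ᵀ)⁻¹ = (1 + X * Xᵀ)⁻¹ := by rw [← Matrix.mul_inv_rev, h₂]
  have comm : X * (1 + Xᵀ * X) = (1 + X * Xᵀ) * X := by
    rw [Matrix.mul_add, Matrix.add_mul, Matrix.mul_one, Matrix.one_mul, Matrix.mul_assoc]
  have commi : X * (1 + Xᵀ * X)⁻¹ = (1 + X * Xᵀ)⁻¹ * X := by
    calc X * (1 + Xᵀ * X)⁻¹
        = (1 + X * Xᵀ)⁻¹ * ((1 + X * Xᵀ) * X) * (1 + Xᵀ * X)⁻¹ := by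
          rw [← Matrix.mul_assoc, Matrix.nonsing_inv_mul _ hdS₂, Matrix.one_mul]
      _ = (1 + X * Xᵀ)⁻¹ * X := by
          rw [← comm, Matrix.mul_assoc, Matrix.mul_assoc,
            Matrix.mul_nonsing_inv _ hdS₁, Matrix.mul_one]
  have commt : (1 + Xᵀ * X) * Xᵀ = Xᵀ * (1 + X * Xᵀ) := by
    rw [Matrix.mul_add, Matrix.add_mul, Matrix.mul_one, Matrix.one_mul, Matrix.mul_assoc]
  have commti : Xᵀ * (1 + X * Xᵀ)⁻¹ = (1 + Xᵀ * X)⁻¹ * Xᵀ := by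
    calc Xᵀ * (1 + X * Xᵀ)⁻¹
        = (1 + Xᵀ * X)⁻¹ * ((1 + Xᵀ * X) * Xᵀ) * (1 + X * Xᵀ)⁻¹ := by
          rw [← Matrix.mul_assoc, Matrix.nonsing_inv_mul _ hdS₁, Matrix.one_mul]
      _ = (1 + Xᵀ * X)⁻¹ * Xᵀ := by
          rw [commt, Matrix.mul_assoc, Matrix.mul_assoc,
            Matrix.mul_nonsing_inv _ hdS₂, Matrix.mul_one]
  have hXA : X * A₁₁ = A₂₁ := by
    rw [hX, Matrix.mul_assoc, Matrix.nonsing_inv_mul _ hdA, Matrix.mul_one]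
  rw [Matrix.fromBlocks_multiply, Matrix.fromBlocks_multiply]
  simp only [Matrix.mul_zero, Matrix.zero_mul, add_zero, zero_add,
    Matrix.one_mul, Matrix.mul_one, Matrix.neg_mul]
  have E₁ : ∀ (n : ℕ) (Z : Matrix (Fin m₁) (Fin n) ℝ),
      R₁⁻¹ * ((R₁ᵀ)⁻¹ * Z) = (1 + Xᵀ * X)⁻¹ * Z := fun n Z => by
    rw [← Matrix.mul_assoc, e₁]
  have E₂ : ∀ (n : ℕ) (Z : Matrix (Fin m₂) (Fin n) ℝ),
      R₂⁻¹ * ((R₂ᵀ)⁻¹ * Z) = (1 + X * Xᵀ)⁻¹ * Z := fun n Z => by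
    rw [← Matrix.mul_assoc, e₂]
  have C₁ : ∀ (n : ℕ) (Z : Matrix (Fin m₂) (Fin n) ℝ),
      Xᵀ * ((1 + X * Xᵀ)⁻¹ * Z) = (1 + Xᵀ * X)⁻¹ * (Xᵀ * Z) := fun n Z => by
    rw [← Matrix.mul_assoc, commti, Matrix.mul_assoc]
  have C₂ : ∀ (n : ℕ) (Z : Matrix (Fin m₁) (Fin n) ℝ),
      X * ((1 + Xᵀ * X)⁻¹ * Z) = (1 + X * Xᵀ)⁻¹ * (X * Z) := fun n Z => by
    rw [← Matrix.mul_assoc, commi, Matrix.mul_assoc]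
  have K₁ : ∀ (n : ℕ) (Z : Matrix (Fin m₁) (Fin n) ℝ),
      R₁⁻¹ * (R₁ * Z) = Z := fun n Z => by
    rw [← Matrix.mul_assoc, Matrix.nonsing_inv_mul _ hdR₁, Matrix.one_mul]
  rw [Matrix.fromBlocks_inj]
  refine ⟨?_, ?_, ?_, ?_⟩
  · rw [K₁]
  · rw [Matrix.mul_assoc Xᵀ, E₂, C₁, E₁, ← Matrix.mul_neg, ← Matrix.mul_add]
    have h : A₁₂ + Xᵀ * A₂₂ + -(Xᵀ * (A₂₂ - X * A₁₂)) = (1 + Xᵀ * X) * A₁₂ := by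
      rw [Matrix.mul_sub, Matrix.add_mul, Matrix.one_mul, ← Matrix.mul_assoc]
      abel
    rw [h, ← Matrix.mul_assoc, Matrix.nonsing_inv_mul _ hdS₁, Matrix.one_mul]
  · rw [Matrix.mul_assoc X, K₁, hXA]
  · rw [Matrix.mul_assoc X, E₁, C₂, E₂, ← Matrix.mul_add]
    have h : X * (A₁₂ + Xᵀ * A₂₂) + (A₂₂ - X * A₁₂) = (1 + X * Xᵀ) * A₂₂ := by
      rw [Matrix.mul_add, Matrix.add_mul, Matrix.one_mul, ← Matrix.mul_assoc]
      abel
    rw [h, ← Matrix.mul_assoc, Matrix.nonsing_inv_mul _ hdS₂, Matrix.one_mul]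
end

section
/- Let Y₁ be a real m×n₁ matrix, T₁ an n₁×n₁ matrix, Ỹ₂ an m×n₂ matrix, and T₂ an n₂×n₂ matrix. Let Y = [Y₁ | Ỹ₂] be the m×(n₁+n₂) matrix obtained by horizontal concatenation, and let T be the (n₁+n₂)×(n₁+n₂) block matrix T = [[T₁, −T₁·Y₁ᵀ·Ỹ₂·T₂],[0, T₂]]. Then (I_m − Y₁T₁Y₁ᵀ)·(I_m − Ỹ₂T₂Ỹ₂ᵀ) = I_m − Y·T·Yᵀ. (Combination of two compact WY representations.) -/
open Matrix

/-- Combination of two compact WY representations: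
`(I - Y₁T₁Y₁ᵀ)(I - Ỹ₂T₂Ỹ₂ᵀ) = I - Y T Yᵀ` where `Y = [Y₁ | Ỹ₂]` and
`T = [[T₁, -T₁Y₁ᵀỸ₂T₂],[0, T₂]]`. -/
theorem compactWY_combine {m n₁ n₂ : ℕ}
    (Y₁ : Matrix (Fin m) (Fin n₁) ℝ) (T₁ : Matrix (Fin n₁) (Fin n₁) ℝ)
    (Y₂ : Matrix (Fin m) (Fin n₂) ℝ) (T₂ : Matrix (Fin n₂) (Fin n₂) ℝ) :
    (1 - Y₁ * T₁ * Y₁ᵀ) * (1 - Y₂ * T₂ * Y₂ᵀ) =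
      1 - fromCols Y₁ Y₂ *
            fromBlocks T₁ (-(T₁ * Y₁ᵀ * Y₂ * T₂)) 0 T₂ *
            (fromCols Y₁ Y₂)ᵀ := by
  rw [transpose_fromCols, fromCols_mul_fromBlocks, fromCols_mul_fromRows]
  simp only [Matrix.mul_zero, add_zero, Matrix.mul_neg, Matrix.neg_mul, Matrix.add_mul,
    sub_mul, mul_sub, Matrix.one_mul, Matrix.mul_one, Matrix.mul_assoc]
  abel
end

section
/- Let A = [A₁ | A₂] be a real m×(n₁+n₂) matrix with block columns A₁ (m×n₁) and A₂ (m×n₂), and assume m ≥ n₁+n₂. Suppose: (i) Q₁ := I_m − Y₁T₁Y₁ᵀ is orthogonal (Q₁ᵀQ₁ = I_m) with Y₁ of size m×n₁, T₁ of size n₁×n₁, and A₁ = Q₁·[R₁; 0] where R₁ is n₁×n₁ and 0 is the (m−n₁)×n₁ zero matrix; (ii) with Ã₂ := Q₁ᵀ·A₂ partitioned as Ã₂ = [A₁₂; A₂₂] with A₁₂ of size n₁×n₂ and A₂₂ of size (m−n₁)×n₂, one has A₂₂ = (I_{m−n₁} − Y₂T₂Y₂ᵀ)·[R₂; 0] with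 R₂ of size n₂×n₂. Let Ỹ₂ = [0; Y₂] (n₁×n₂ zero block stacked on Y₂), Y = [Y₁ | Ỹ₂], T = [[T₁, −T₁·Y₁ᵀ·Ỹ₂·T₂],[0, T₂]], and R = [[R₁, A₁₂],[0, R₂]]. Then A = (I_m − Y·T·Yᵀ)·[R; 0], where 0 is the (m−n₁−n₂)×(n₁+n₂) zero matrix. (Correctness of the recursive WY-based QR combination step.) -/
open Matrix

/-- Correctness of the recursive WY-based QR combination step. The `m` rows are
partitioned as `Fin n₁ ⊕ (Fin n₂ ⊕ Fin q)` (so `m = n₁ + n₂ + q ≥ n₁ + n₂`).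
Given a WY-based QR decomposition `A₁ = Q₁ [R₁; 0]` of the first block column with
`Q₁ = I - Y₁T₁Y₁ᵀ` orthogonal, the partition `Q₁ᵀA₂ = [A₁₂; A₂₂]` of the updated
second block column, and a WY-based QR decomposition
`A₂₂ = (I - Y₂T₂Y₂ᵀ) [R₂; 0]`, the combined factors `Y = [Y₁ | [0; Y₂]]`,
`T = [[T₁, -T₁Y₁ᵀỸ₂T₂],[0, T₂]]`, `R = [[R₁, A₁₂],[0, R₂]]` satisfy
`A = (I - Y T Yᵀ) [R; 0]`. -/
theorem recursive_wy_qr_combine {n₁ n₂ q : ℕ}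
    (A₁ Y₁ : Matrix (Fin n₁ ⊕ (Fin n₂ ⊕ Fin q)) (Fin n₁) ℝ)
    (A₂ : Matrix (Fin n₁ ⊕ (Fin n₂ ⊕ Fin q)) (Fin n₂) ℝ)
    (T₁ R₁ : Matrix (Fin n₁) (Fin n₁) ℝ)
    (hQ₁ : (1 - Y₁ * T₁ * Y₁ᵀ)ᵀ * (1 - Y₁ * T₁ * Y₁ᵀ) = 1)
    (hA₁ : A₁ = (1 - Y₁ * T₁ * Y₁ᵀ) *
      fromRows R₁ (0 : Matrix (Fin n₂ ⊕ Fin q) (Fin n₁) ℝ))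
    (A₁₂ : Matrix (Fin n₁) (Fin n₂) ℝ)
    (A₂₂ : Matrix (Fin n₂ ⊕ Fin q) (Fin n₂) ℝ)
    (hsplit : (1 - Y₁ * T₁ * Y₁ᵀ)ᵀ * A₂ = fromRows A₁₂ A₂₂)
    (Y₂ : Matrix (Fin n₂ ⊕ Fin q) (Fin n₂) ℝ)
    (T₂ R₂ : Matrix (Fin n₂) (Fin n₂) ℝ)
    (hA₂₂ : A₂₂ = (1 - Y₂ * T₂ * Y₂ᵀ) *
      fromRows R₂ (0 : Matrix (Fin q) (Fin n₂) ℝ)) :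
    fromCols A₁ A₂ =
      (1 - fromCols Y₁ (fromRows (0 : Matrix (Fin n₁) (Fin n₂) ℝ) Y₂) *
            fromBlocks T₁
              (-(T₁ * Y₁ᵀ * fromRows (0 : Matrix (Fin n₁) (Fin n₂) ℝ) Y₂ * T₂)) 0 T₂ *
            (fromCols Y₁ (fromRows (0 : Matrix (Fin n₁) (Fin n₂) ℝ) Y₂))ᵀ) *
        fromRows (fromCols R₁ A₁₂)
          (fromRows (fromCols 0 R₂) (0 : Matrix (Fin q) (Fin n₁ ⊕ Fin n₂) ℝ)) := by
  set Q₁ : Matrix (Fin n₁ ⊕ (Fin n₂ ⊕ Fin q)) (Fin n₁ ⊕ (Fin n₂ ⊕ Fin q)) ℝ :=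
    1 - Y₁ * T₁ * Y₁ᵀ with hQ₁def
  set Z : Matrix (Fin n₁ ⊕ (Fin n₂ ⊕ Fin q)) (Fin n₂) ℝ :=
    fromRows (0 : Matrix (Fin n₁) (Fin n₂) ℝ) Y₂ with hZ
  have hQinv : Q₁ * Q₁ᵀ = 1 := mul_eq_one_comm.mp hQ₁
  -- Step 1: the combined WY factor equals Q₁ * (1 - Z T₂ Zᵀ)
  have hfac :
      (1 - fromCols Y₁ Z * fromBlocks T₁ (-(T₁ * Y₁ᵀ * Z * T₂)) 0 T₂ *
        (fromCols Y₁ Z)ᵀ) = Q₁ * (1 - Z * T₂ * Zᵀ) := by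
    rw [transpose_fromCols, fromCols_mul_fromBlocks, fromCols_mul_fromRows]
    simp only [hQ₁def, Matrix.mul_zero, add_zero, Matrix.mul_neg, Matrix.neg_mul,
      Matrix.add_mul, Matrix.mul_sub, Matrix.sub_mul, Matrix.mul_one, Matrix.one_mul,
      Matrix.mul_assoc]
    abel
  -- Step 2: 1 - Z T₂ Zᵀ is block diagonal
  have hZblk : (1 - Z * T₂ * Zᵀ) =
      fromBlocks 1 0 0 (1 - Y₂ * T₂ * Y₂ᵀ) := by
    rw [hZ, transpose_fromRows, fromRows_mul, fromRows_mul_fromCols, ← fromBlocks_one]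
    ext (i | i) (j | j) <;> simp [fromBlocks]
  -- Step 3: rearrange the R stack as columns
  have hRstack :
      fromRows (fromCols R₁ A₁₂)
          (fromRows (fromCols 0 R₂) (0 : Matrix (Fin q) (Fin n₁ ⊕ Fin n₂) ℝ)) =
      fromRows (fromCols R₁ A₁₂)
          (fromCols (0 : Matrix (Fin n₂ ⊕ Fin q) (Fin n₁) ℝ)
            (fromRows R₂ (0 : Matrix (Fin q) (Fin n₂) ℝ))) := by
    ext (i | i | i) (j | j) <;> simp
  have hswap :
      fromRows (fromCols R₁ A₁₂) (fromCols (0 : Matrix (Fin n₂ ⊕ Fin q) (Fin n₁) ℝ) A₂₂) =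
      fromCols (fromRows R₁ (0 : Matrix (Fin n₂ ⊕ Fin q) (Fin n₁) ℝ))
        (fromRows A₁₂ A₂₂) := by
    ext (i | i) (j | j) <;> simp
  rw [hfac, hZblk, hRstack, Matrix.mul_assoc, fromBlocks_mul_fromRows]
  simp only [Matrix.one_mul, Matrix.zero_mul, Matrix.mul_zero, add_zero, zero_add,
    mul_fromCols, Matrix.mul_zero, ← hA₂₂]
  rw [hswap, mul_fromCols, ← hA₁, ← hsplit, ← Matrix.mul_assoc, hQinv, Matrix.one_mul]
end

section
/- Let Y₁ be a real m×n₁ matrix and T₁ an n₁×n₁ matrix such that I_m − Y₁T₁Y₁ᵀ is orthogonal, and let Y₂ be an (m−n₁)×n₂ matrix and T₂ an n₂×n₂ matrix such that I_{m−n₁} − Y₂T₂Y₂ᵀ is orthogonal. Let Ỹ₂ = [0; Y₂] (n₁×n₂ zero block stacked on Y₂), Y = [Y₁ | Ỹ₂], and T = [[T₁, −T₁·Y₁ᵀ·Ỹ₂·T₂],[0, T₂]]. Then I_m − Y·T·Yᵀ is orthogonal. -/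
open Matrix

/-- If `I - Y₁T₁Y₁ᵀ` and `I - Y₂T₂Y₂ᵀ` are orthogonal, then so is `I - Y T Yᵀ`
with `Y = [Y₁ | [0; Y₂]]` and `T = [[T₁, -T₁Y₁ᵀỸ₂T₂],[0, T₂]]`. -/
theorem compactWY_combined_orthogonal {n₁ p n₂ : ℕ}
    (Y₁ : Matrix (Fin n₁ ⊕ Fin p) (Fin n₁) ℝ) (T₁ : Matrix (Fin n₁) (Fin n₁) ℝ)
    (Y₂ : Matrix (Fin p) (Fin n₂) ℝ) (T₂ : Matrix (Fin n₂) (Fin n₂) ℝ)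
    (h₁ : (1 - Y₁ * T₁ * Y₁ᵀ)ᵀ * (1 - Y₁ * T₁ * Y₁ᵀ) = 1)
    (h₂ : (1 - Y₂ * T₂ * Y₂ᵀ)ᵀ * (1 - Y₂ * T₂ * Y₂ᵀ) = 1) :
    (1 - fromCols Y₁ (fromRows (0 : Matrix (Fin n₁) (Fin n₂) ℝ) Y₂) *
          fromBlocks T₁
            (-(T₁ * Y₁ᵀ * fromRows (0 : Matrix (Fin n₁) (Fin n₂) ℝ) Y₂ * T₂)) 0 T₂ *
          (fromCols Y₁ (fromRows (0 : Matrix (Fin n₁) (Fin n₂) ℝ) Y₂))ᵀ)ᵀ *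
      (1 - fromCols Y₁ (fromRows (0 : Matrix (Fin n₁) (Fin n₂) ℝ) Y₂) *
          fromBlocks T₁
            (-(T₁ * Y₁ᵀ * fromRows (0 : Matrix (Fin n₁) (Fin n₂) ℝ) Y₂ * T₂)) 0 T₂ *
          (fromCols Y₁ (fromRows (0 : Matrix (Fin n₁) (Fin n₂) ℝ) Y₂))ᵀ) = 1 := by
  set Yt : Matrix (Fin n₁ ⊕ Fin p) (Fin n₂) ℝ :=
    fromRows (0 : Matrix (Fin n₁) (Fin n₂) ℝ) Y₂ with hYt
  set A : Matrix (Fin n₁ ⊕ Fin p) (Fin n₁ ⊕ Fin p) ℝ := Y₁ * T₁ * Y₁ᵀ with hA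
  set B : Matrix (Fin n₁ ⊕ Fin p) (Fin n₁ ⊕ Fin p) ℝ := Yt * T₂ * Ytᵀ with hB
  have key : fromCols Y₁ Yt * fromBlocks T₁ (-(T₁ * Y₁ᵀ * Yt * T₂)) 0 T₂ *
      (fromCols Y₁ Yt)ᵀ = A + B - A * B := by
    rw [transpose_fromCols, fromCols_mul_fromBlocks, fromCols_mul_fromRows]
    simp only [hA, hB, Matrix.mul_zero, add_zero, Matrix.mul_neg, Matrix.neg_mul,
      Matrix.add_mul, Matrix.mul_assoc]
    abel
  rw [key]
  have hfact : (1 : Matrix (Fin n₁ ⊕ Fin p) (Fin n₁ ⊕ Fin p) ℝ) - (A + B - A * B) =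
      (1 - A) * (1 - B) := by noncomm_ring
  have hB2 : (1 : Matrix (Fin n₁ ⊕ Fin p) (Fin n₁ ⊕ Fin p) ℝ) - B =
      fromBlocks 1 0 0 (1 - Y₂ * T₂ * Y₂ᵀ) := by
    have : B = fromBlocks 0 0 0 (Y₂ * T₂ * Y₂ᵀ) := by
      rw [hB, hYt, transpose_fromRows, fromRows_mul, fromRows_mul_fromCols]
      simp
    rw [this, ← fromBlocks_one, sub_eq_add_neg, fromBlocks_neg, fromBlocks_add]
    simp [sub_eq_add_neg]
  have hBortho : ((1 : Matrix (Fin n₁ ⊕ Fin p) (Fin n₁ ⊕ Fin p) ℝ) - B)ᵀ * (1 - B) = 1 := by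
    rw [hB2, fromBlocks_transpose, fromBlocks_multiply]
    simp only [transpose_zero, transpose_one, Matrix.mul_zero, Matrix.zero_mul,
      Matrix.mul_one, Matrix.one_mul, add_zero, zero_add, h₂, ← fromBlocks_one]
  rw [hfact, transpose_mul, Matrix.mul_assoc, ← Matrix.mul_assoc (1 - A)ᵀ, h₁,
    Matrix.one_mul, hBortho]
end

section
/- Let Ã be a real m×m matrix, B_R an r₁×m matrix, C an r₂×m matrix, and set H̃ = [Ã; B_R; C] (vertical stacking, of size (m+r₁+r₂)×m). Let Ỹ = [Y_A; Ỹ_B; Y_C] be partitioned conformally (Y_A of size m×m, Ỹ_B of size r₁×m, Y_C of size r₂×m), let T and R be m×m matrices, and suppose (I − Ỹ·T·Ỹᵀ)ᵀ·H̃ = [R; 0], where 0 is the (r₁+r₂)×m zero matrix. Let B_L be a p×r₁ matrix with orthonormal columns, i.e., B_Lᵀ·B_L = I_{r₁}. Define H = [Ã; B_L·B_R; C] (size (m+p+r₂)×m) and Y = [Y_A; B_L·Ỹ_B; Y_C]. Then (I − Y·T·Yᵀ)ᵀ·H = [R; 0], where 0 is the (p+r₂)×m zero matrix. (Postprocessing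 step: the QR decomposition of the compressed block column yields a QR decomposition of the full block column.) -/
open Matrix

/-- Postprocessing step: a QR decomposition of the compressed block column
`H̃ = [Ã; B_R; C]` yields a QR decomposition of the full block column
`H = [Ã; B_L B_R; C]` when `B_L` has orthonormal columns, by replacing
`Ỹ_B` with `B_L Ỹ_B` in the WY factor. -/
theorem postprocessing_qr {m r₁ r₂ p : ℕ}
    (Atil : Matrix (Fin m) (Fin m) ℝ) (BR : Matrix (Fin r₁) (Fin m) ℝ)
    (C : Matrix (Fin r₂) (Fin m) ℝ)
    (YA : Matrix (Fin m) (Fin m) ℝ) (YB : Matrix (Fin r₁) (Fin m) ℝ)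
    (YC : Matrix (Fin r₂) (Fin m) ℝ)
    (T R : Matrix (Fin m) (Fin m) ℝ)
    (h : (1 - fromRows YA (fromRows YB YC) * T * (fromRows YA (fromRows YB YC))ᵀ)ᵀ *
          fromRows Atil (fromRows BR C) =
        fromRows R (0 : Matrix (Fin r₁ ⊕ Fin r₂) (Fin m) ℝ))
    (BL : Matrix (Fin p) (Fin r₁) ℝ) (hBL : BLᵀ * BL = 1) :
    (1 - fromRows YA (fromRows (BL * YB) YC) * T *
          (fromRows YA (fromRows (BL * YB) YC))ᵀ)ᵀ *
        fromRows Atil (fromRows (BL * BR) C) =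
      fromRows R (0 : Matrix (Fin p ⊕ Fin r₂) (Fin m) ℝ) := by
  set D : Matrix (Fin m ⊕ (Fin p ⊕ Fin r₂)) (Fin m ⊕ (Fin r₁ ⊕ Fin r₂)) ℝ :=
    fromBlocks 1 0 0 (fromBlocks BL 0 0 1) with hDdef
  have hD : ∀ (X : Matrix (Fin m) (Fin m) ℝ) (Z : Matrix (Fin r₁) (Fin m) ℝ)
      (W : Matrix (Fin r₂) (Fin m) ℝ),
      D * fromRows X (fromRows Z W) = fromRows X (fromRows (BL * Z) W) := by
    intro X Z W
    simp [hDdef, fromBlocks_mul_fromRows]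
  have hDtD : Dᵀ * D = 1 := by
    simp [hDdef, fromBlocks_transpose, fromBlocks_multiply, hBL, fromBlocks_one]
  rw [← hD, ← hD]
  have key : (1 - D * fromRows YA (fromRows YB YC) * T *
        (D * fromRows YA (fromRows YB YC))ᵀ)ᵀ *
        (D * fromRows Atil (fromRows BR C)) =
      D * ((1 - fromRows YA (fromRows YB YC) * T * (fromRows YA (fromRows YB YC))ᵀ)ᵀ *
        fromRows Atil (fromRows BR C)) := by
    set Y := fromRows YA (fromRows YB YC)
    set H := fromRows Atil (fromRows BR C)
    have : (D * Y * T * (D * Y)ᵀ)ᵀ * (D * H) = D * ((Y * T * Yᵀ)ᵀ * H) := by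
      calc (D * Y * T * (D * Y)ᵀ)ᵀ * (D * H)
          = D * Y * Tᵀ * (Yᵀ * (Dᵀ * D) * H) := by
            simp only [transpose_mul, transpose_transpose, Matrix.mul_assoc]
        _ = D * ((Y * T * Yᵀ)ᵀ * H) := by
            rw [hDtD]
            simp only [transpose_mul, transpose_transpose, Matrix.mul_one, Matrix.one_mul, Matrix.mul_assoc]
    simp only [transpose_sub, transpose_one, Matrix.sub_mul, Matrix.one_mul, Matrix.mul_sub, this]
  rw [key, h, show (0 : Matrix (Fin r₁ ⊕ Fin r₂) (Fin m) ℝ) = fromRows 0 0 from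
    fromRows_zero.symm, hD]
  simp
end

section
/- Let Ỹ = [Y_A; Ỹ_B; Y_C] be a real (m+r₁+r₂)×m matrix partitioned by rows (Y_A of size m×m, Ỹ_B of size r₁×m, Y_C of size r₂×m), and let T be an m×m matrix such that Q̃ := I − Ỹ·T·Ỹᵀ is orthogonal. Let B_L be a p×r₁ matrix with B_Lᵀ·B_L = I_{r₁}, and define Y = [Y_A; B_L·Ỹ_B; Y_C] of size (m+p+r₂)×m. Then Q := I − Y·T·Yᵀ is orthogonal. -/
open Matrix

/-- Expansion of `(1 - Z T Zᵀ)ᵀ (1 - Z T Zᵀ)`. -/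
lemma expand_aux {n k : Type*} [Fintype n] [Fintype k] [DecidableEq n]
    (Z : Matrix n k ℝ) (T : Matrix k k ℝ) :
    (1 - Z * T * Zᵀ)ᵀ * (1 - Z * T * Zᵀ) =
      1 - Z * (Tᵀ + T - Tᵀ * (Zᵀ * Z) * T) * Zᵀ := by
  simp only [transpose_sub, transpose_one, transpose_mul, transpose_transpose,
    Matrix.sub_mul, Matrix.mul_sub, Matrix.one_mul, Matrix.mul_one,
    Matrix.add_mul, Matrix.mul_add, Matrix.mul_assoc]
  abel

/-- A block matrix times a twice-row-partitioned matrix. -/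
lemma blocks_mul_rows {a b c d k : Type*} [Fintype c] [Fintype d]
    (A : Matrix a c ℝ) (B : Matrix a d ℝ) (C : Matrix b c ℝ) (D : Matrix b d ℝ)
    (X : Matrix c k ℝ) (Y : Matrix d k ℝ) :
    fromBlocks A B C D * fromRows X Y = fromRows (A * X + B * Y) (C * X + D * Y) := by
  ext (i | i) j <;>
    simp [mul_apply, fromBlocks, Fintype.sum_sum_type, Finset.sum_add_distrib,
      fromRows_apply_inl, fromRows_apply_inr]

/-- Postprocessing preserves orthogonality: if `Q̃ = I - Ỹ T Ỹᵀ` is orthogonal with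
`Ỹ = [Y_A; Ỹ_B; Y_C]` and `B_L` has orthonormal columns, then `Q = I - Y T Yᵀ`
with `Y = [Y_A; B_L Ỹ_B; Y_C]` is orthogonal. -/
theorem postprocessing_orthogonal {m r₁ r₂ p : ℕ}
    (YA : Matrix (Fin m) (Fin m) ℝ) (YB : Matrix (Fin r₁) (Fin m) ℝ)
    (YC : Matrix (Fin r₂) (Fin m) ℝ) (T : Matrix (Fin m) (Fin m) ℝ)
    (hQ : (1 - fromRows YA (fromRows YB YC) * T * (fromRows YA (fromRows YB YC))ᵀ)ᵀ *
        (1 - fromRows YA (fromRows YB YC) * T * (fromRows YA (fromRows YB YC))ᵀ) = 1)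
    (BL : Matrix (Fin p) (Fin r₁) ℝ) (hBL : BLᵀ * BL = 1) :
    (1 - fromRows YA (fromRows (BL * YB) YC) * T *
          (fromRows YA (fromRows (BL * YB) YC))ᵀ)ᵀ *
      (1 - fromRows YA (fromRows (BL * YB) YC) * T *
          (fromRows YA (fromRows (BL * YB) YC))ᵀ) = 1 := by
  set Z : Matrix (Fin m ⊕ (Fin r₁ ⊕ Fin r₂)) (Fin m) ℝ :=
    fromRows YA (fromRows YB YC) with hZ
  set Y : Matrix (Fin m ⊕ (Fin p ⊕ Fin r₂)) (Fin m) ℝ :=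
    fromRows YA (fromRows (BL * YB) YC) with hY
  set M : Matrix (Fin m ⊕ (Fin p ⊕ Fin r₂)) (Fin m ⊕ (Fin r₁ ⊕ Fin r₂)) ℝ :=
    fromBlocks 1 0 0 (fromBlocks BL 0 0 1) with hM
  have hMZ : M * Z = Y := by
    rw [hM, hZ, hY, blocks_mul_rows, blocks_mul_rows]
    simp
  have hMM : Mᵀ * M = 1 := by
    rw [hM, fromBlocks_transpose, fromBlocks_multiply, fromBlocks_transpose,
      fromBlocks_multiply]
    simp [hBL, ← fromBlocks_one]
  have hZZ : Yᵀ * Y = Zᵀ * Z := by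
    rw [← hMZ, transpose_mul, Matrix.mul_assoc, ← Matrix.mul_assoc Mᵀ, hMM, Matrix.one_mul]
  set S := Tᵀ + T - Tᵀ * (Zᵀ * Z) * T with hS
  have h0 : Z * S * Zᵀ = 0 := by
    have := hQ
    rw [expand_aux, ← hS] at this
    have : (1 : Matrix _ _ ℝ) - Z * S * Zᵀ = 1 - 0 := by rw [this, sub_zero]
    exact (sub_right_injective this)
  rw [expand_aux, hZZ, ← hS, ← hMZ]
  have : M * Z * S * (M * Z)ᵀ = M * (Z * S * Zᵀ) * Mᵀ := by
    rw [transpose_mul]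
    simp only [Matrix.mul_assoc]
  rw [this, h0, Matrix.mul_zero, Matrix.zero_mul, sub_zero]
end
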